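/- Fix an integer k ≥ 1 and α > 0. The limit law of the normalized k-th upper extreme in the Weibull case, with density ψ_α^{(k)}(x) = (α/(k-1)!) (-x)^{αk-1} e^{-(-x)^{α}} for x < 0, has Shannon entropy H(ψ_α^{(k)}) = -log(α/(k-1)!) - ((αk-1)/α)·(-γ + Σ_{i=1}^{k-1} 1/i) + Γ(k+1)/(k-1)!. -/

import Mathlib

/-!
Substituting `t = (-x) ^ α` turns `ψ_α^(k)` into the `Gamma(k, 1)` density
`t ^ (k - 1) e^(-t) / (k - 1)!`, and `log ψ_α^(k)` into
`log (α / (k - 1)!) + ((α k - 1) / α) log t - t`.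
The entropy is therefore an affine combination of `E[1] = 1`, `E[T] = k` and
`E[log T] = Γ'(k) / Γ(k) = -γ + H_(k-1)` for `T ~ Gamma(k, 1)`.
-/

open MeasureTheory Real Set Filter Asymptotics Topology
open scoped Nat

theorem integrableOn_pow_mul_exp_neg (n : ℕ) :
    IntegrableOn (fun t : ℝ => t ^ n * exp (-t)) (Ioi 0) := by
  refine (GammaIntegral_convergent (s := n + 1) (by positivity)).congr_fun (fun t _ => ?_)
    measurableSet_Ioi
  simp [mul_comm]

theorem integral_pow_mul_exp_neg (n : ℕ) :
    ∫ t in Ioi (0 : ℝ), t ^ n * exp (-t) = n ! := by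
  rw [← Gamma_nat_eq_factorial, Gamma_eq_integral (by positivity)]
  refine setIntegral_congr_fun measurableSet_Ioi fun t _ => ?_
  simp [mul_comm]

theorem integrableOn_rpow_mul_log_mul_exp_neg {s : ℝ} (hs : 0 < s) :
    IntegrableOn (fun t : ℝ => t ^ (s - 1) * (log t * exp (-t))) (Ioi 0) := by
  have hexp_bot : (fun t : ℝ => exp (-t)) =O[𝓝[>] 0] (· ^ (-0 : ℝ)) := by
    simp only [neg_zero, rpow_zero]
    exact (continuous_exp.comp continuous_neg).continuousWithinAt.tendsto.isBigO_one ℝ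
  have hexp_top : (fun t : ℝ => exp (-t)) =O[atTop] (· ^ (-(s + 2))) := by
    simpa only [neg_one_mul] using (isLittleO_exp_neg_mul_rpow_atTop one_pos _).isBigO
  refine mellin_convergent_of_isBigO_scalar (a := s + 1) (b := s / 2) ?_
    (isBigO_rpow_top_log_smul (by linarith) hexp_top) (by linarith)
    (isBigO_rpow_zero_log_smul (by linarith) hexp_bot) (by linarith)
  exact (continuousOn_log.mono fun t ht => ne_of_gt ht).mul (by fun_prop)
    |>.locallyIntegrableOn measurableSet_Ioi

theorem Complex.hasDerivAt_Gamma_of_re_pos {s : ℂ} (hs : 0 < s.re) :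
    HasDerivAt Gamma (∫ t : ℝ in Ioi 0, (t : ℂ) ^ (s - 1) * (Real.log t * Real.exp (-t))) s := by
  refine (hasDerivAt_GammaIntegral hs).congr_of_eventuallyEq ?_
  filter_upwards [(isOpen_lt continuous_const continuous_re).mem_nhds hs] with z hz
    using Gamma_eq_integral hz

theorem integral_pow_mul_log_mul_exp_neg (n : ℕ) :
    ∫ t in Ioi (0 : ℝ), t ^ n * (log t * exp (-t))
      = n ! * (-eulerMascheroniConstant + harmonic n) := by
  have hre : 0 < ((n : ℂ) + 1).re := by
    simp only [Complex.add_re, Complex.natCast_re, Complex.one_re]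
    positivity
  have hderiv := (Complex.hasDerivAt_Gamma_of_re_pos hre).unique (Complex.hasDerivAt_Gamma_nat n)
  simp only [add_sub_cancel_right, Complex.cpow_natCast] at hderiv
  apply Complex.ofReal_injective
  rw [← integral_complex_ofReal]
  simp only [Complex.ofReal_mul, Complex.ofReal_pow, Complex.ofReal_add, Complex.ofReal_neg,
    Complex.ofReal_natCast, Complex.ofReal_ratCast]
  exact hderiv

theorem integral_Iio_comp_neg_rpow {E : Type*} [NormedAddCommGroup E] [NormedSpace ℝ E]
    {p : ℝ} (hp : 0 < p) (g : ℝ → E) :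
    ∫ x in Iio 0, (p * (-x) ^ (p - 1)) • g ((-x) ^ p) = ∫ t in Ioi 0, g t := by
  rw [← integral_Iic_eq_integral_Iio, ← integral_comp_rpow_Ioi_of_pos hp, ← neg_zero,
    ← integral_comp_neg_Iic, neg_zero]

theorem integral_pow_mul_exp_neg_mul_affine_log (n : ℕ) (a b : ℝ) :
    ∫ t in Ioi (0 : ℝ), t ^ n * exp (-t) / n ! * (a + b * log t - t)
      = a + b * (-eulerMascheroniConstant + harmonic n) - (n + 1) := by
  have hlog : IntegrableOn (fun t : ℝ => t ^ n * (log t * exp (-t))) (Ioi 0) := by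
    simpa using integrableOn_rpow_mul_log_mul_exp_neg (s := n + 1) (by positivity)
  have hsplit : (fun t : ℝ => t ^ n * exp (-t) / n ! * (a + b * log t - t)) = fun t =>
      a / n ! * (t ^ n * exp (-t)) + b / n ! * (t ^ n * (log t * exp (-t)))
        - 1 / n ! * (t ^ (n + 1) * exp (-t)) := by
    ext t
    ring
  have hpow (m : ℕ) := integrableOn_pow_mul_exp_neg m
  rw [hsplit, integral_sub, integral_add, integral_const_mul, integral_const_mul,
    integral_const_mul, integral_pow_mul_exp_neg, integral_pow_mul_exp_neg,
    integral_pow_mul_log_mul_exp_neg, Nat.factorial_succ]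
  · field_simp
    push_cast
    ring
  · exact (hpow n).const_mul _
  · exact hlog.const_mul _
  · exact ((hpow n).const_mul _).add (hlog.const_mul _)
  · exact (hpow _).const_mul _

/-- The density `ψ_α^(k)`; only its values on `x < 0` matter. -/
noncomputable def kthWeibullDensity (k : ℕ) (α x : ℝ) : ℝ :=
  α / (k - 1)! * (-x) ^ (α * k - 1) * exp (-(-x) ^ α)

theorem kthWeibullDensity_neg {k : ℕ} (hk : 1 ≤ k) (α : ℝ) {u : ℝ} (hu : 0 < u) :
    kthWeibullDensity k α (-u)
      = α * u ^ (α - 1) * ((u ^ α) ^ (k - 1) * exp (-u ^ α) / (k - 1)!) := by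
  have hexp : α * k - 1 = (α - 1) + α * (k - 1 : ℕ) := by
    rw [Nat.cast_sub hk]
    ring
  rw [kthWeibullDensity, neg_neg, hexp, rpow_add hu, rpow_mul_natCast hu.le]
  ring

theorem log_kthWeibullDensity_neg (k : ℕ) {α : ℝ} (hα : α ≠ 0) {u : ℝ} (hu : 0 < u) :
    log (kthWeibullDensity k α (-u))
      = log (α / (k - 1)!) + (α * k - 1) / α * log (u ^ α) - u ^ α := by
  have hfac : ((k - 1)! : ℝ) ≠ 0 := by positivity
  rw [kthWeibullDensity, neg_neg, log_mul (by positivity) (exp_ne_zero _),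
    log_mul (div_ne_zero hα hfac) (rpow_pos_of_pos hu _).ne', log_exp, log_rpow hu,
    log_rpow hu]
  field_simp
  ring

theorem neg_integral_kthWeibullDensity_mul_log {k : ℕ} (hk : 1 ≤ k) {α : ℝ} (hα : 0 < α) :
    -∫ x in Iio 0, kthWeibullDensity k α x * log (kthWeibullDensity k α x)
      = -log (α / (k - 1)!) - (α * k - 1) / α *
          (-eulerMascheroniConstant + harmonic (k - 1)) + k := by
  set G : ℝ → ℝ := fun t => t ^ (k - 1) * exp (-t) / (k - 1)!
    * (log (α / (k - 1)!) + (α * k - 1) / α * log t - t)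
  have hpointwise : ∀ x ∈ Iio (0 : ℝ), kthWeibullDensity k α x * log (kthWeibullDensity k α x)
      = (α * (-x) ^ (α - 1)) • G ((-x) ^ α) := by
    rintro x (hx : x < 0)
    obtain ⟨u, rfl⟩ : ∃ u, x = -u := ⟨-x, (neg_neg x).symm⟩
    have hu : 0 < u := neg_lt_zero.mp hx
    rw [log_kthWeibullDensity_neg k hα.ne' hu, kthWeibullDensity_neg hk α hu, smul_eq_mul,
      neg_neg]
    ring
  rw [setIntegral_congr_fun measurableSet_Iio hpointwise, integral_Iio_comp_neg_rpow hα G,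
    integral_pow_mul_exp_neg_mul_affine_log, Nat.cast_sub hk]
  ring

/-- For an integer `k ≥ 1` and `α > 0`, the limit law of the
normalized `k`-th upper extreme in the Weibull case, with density
`ψ_α^(k) x = (α/(k-1)!) (-x)^(αk-1) e^(-(-x)^α)` for `x < 0`, has Shannon entropy
`-log (α/(k-1)!) - ((αk-1)/α) (-γ + ∑_{i=1}^{k-1} 1/i) + Γ(k+1)/(k-1)!`. -/
theorem entropy_kth_weibull (k : ℕ) (hk : 1 ≤ k) (α : ℝ) (hα : 0 < α) :
    -∫ x in Set.Iio (0 : ℝ),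
        (α / (Nat.factorial (k - 1)) * (-x) ^ (α * k - 1) * Real.exp (-(-x) ^ α)) *
          Real.log
            (α / (Nat.factorial (k - 1)) * (-x) ^ (α * k - 1) * Real.exp (-(-x) ^ α))
      = -Real.log (α / (Nat.factorial (k - 1)))
        - ((α * k - 1) / α) *
            (-Real.eulerMascheroniConstant + ∑ i ∈ Finset.Icc 1 (k - 1), (1 : ℝ) / i)
        + Real.Gamma (k + 1) / (Nat.factorial (k - 1)) := by
  have hGamma : Gamma (k + 1) / (k - 1)! = k := by
    obtain ⟨n, rfl⟩ := Nat.exists_eq_add_of_le' hk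
    rw [Gamma_nat_eq_factorial, Nat.add_sub_cancel, Nat.factorial_succ]
    push_cast
    field_simp
  have hharmonic : ((harmonic (k - 1) : ℚ) : ℝ) = ∑ i ∈ Finset.Icc 1 (k - 1), (1 : ℝ) / i := by
    simp [harmonic_eq_sum_Icc, one_div]
  rw [hGamma, ← hharmonic]
  exact neg_integral_kthWeibullDensity_mul_log hk hα
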